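/- arXiv:2103.11926 — 2 statements merged into one kernel-verified Lean document; each statement's English description precedes it below -/
import Mathlib

section
/- There exists an execution (over at least 2 processes and at least 2 operation types) that is k-nonblocking but not DNB_k; hence DNB_k is strictly stronger than k-nonblocking. -/
/-!
Let one process `p₀` be stuck on type `t₀` while every other process completes infinitely many
operations, all of a different type `t₁`. The `k` other processes make progress, so the execution
is `k`-nonblocking, but nobody ever completes an operation of type `t₀`, so DNB_k fails at `t₀`.
-/

section Execution

variable {P T : Type*}

def IsKNonblocking (k : ℕ) (stuckOn completesInf : P → T → Prop) : Prop :=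
  (∃ p t, stuckOn p t) → ∃ S : Finset P, k ≤ S.card ∧ ∀ p ∈ S, ∃ t, completesInf p t

def IsDNB (k : ℕ) (stuckOn completesInf : P → T → Prop) : Prop :=
  ∀ t, (∃ p, stuckOn p t) → ∃ S : Finset P, k ≤ S.card ∧ ∀ p ∈ S, completesInf p t

def stuckOnly (p₀ : P) (t₀ : T) : P → T → Prop := fun p t => p = p₀ ∧ t = t₀

def othersComplete (p₀ : P) (t₁ : T) : P → T → Prop := fun p t => p ≠ p₀ ∧ t = t₁

theorem isKNonblocking_othersComplete [Fintype P] [DecidableEq P] {k : ℕ}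
    (hk : k ≤ Fintype.card P - 1) (stuckOn : P → T → Prop) (p₀ : P) (t₁ : T) :
    IsKNonblocking k stuckOn (othersComplete p₀ t₁) := fun _ =>
  ⟨Finset.univ.erase p₀, by rwa [Finset.card_erase_of_mem (Finset.mem_univ _), Finset.card_univ],
    fun _ hp => ⟨t₁, Finset.ne_of_mem_erase hp, rfl⟩⟩

theorem not_isDNB_of_stuckOn_of_forall_not_completesInf {k : ℕ} (hk : 1 ≤ k)
    {stuckOn completesInf : P → T → Prop} {p₀ : P} {t₀ : T} (hstuck : stuckOn p₀ t₀)
    (hnone : ∀ p, ¬ completesInf p t₀) : ¬ IsDNB k stuckOn completesInf := by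
  intro hdnb
  obtain ⟨S, hcard, hS⟩ := hdnb t₀ ⟨p₀, hstuck⟩
  obtain ⟨p, hp⟩ := Finset.card_pos.mp (hk.trans hcard)
  exact hnone p (hS p hp)

theorem not_isDNB_stuckOnly_othersComplete {k : ℕ} (hk : 1 ≤ k) (p₀ : P) {t₀ t₁ : T}
    (ht : t₀ ≠ t₁) : ¬ IsDNB k (stuckOnly p₀ t₀) (othersComplete p₀ t₁) :=
  not_isDNB_of_stuckOn_of_forall_not_completesInf hk ⟨rfl, rfl⟩ fun _ h => ht h.2

end Execution

/-- DNB_k is strictly stronger than k-nonblocking: for every `k ≥ 1` there is an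
execution over `k+1` processes and `2` operation types (given by predicates
`stuckOn` and `completesInf`) that is k-nonblocking but not differentiated
k-nonblocking. -/
theorem knb_not_implies_dnb (k : ℕ) (hk : 1 ≤ k) :
    ∃ (stuckOn completesInf : Fin (k + 1) → Fin 2 → Prop),
      -- k-nonblocking:
      ((∃ p t, stuckOn p t) →
        ∃ S : Finset (Fin (k + 1)), k ≤ S.card ∧ ∀ p ∈ S, ∃ t, completesInf p t) ∧
      -- not DNB_k:
      ¬ (∀ t, (∃ p, stuckOn p t) →
          ∃ S : Finset (Fin (k + 1)), k ≤ S.card ∧ ∀ p ∈ S, completesInf p t) :=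
  ⟨stuckOnly 0 0, othersComplete 0 1,
    isKNonblocking_othersComplete (by simp) _ 0 1,
    not_isDNB_stuckOnly_othersComplete hk 0 (by decide)⟩
end

section
/- If the head pointer only ever moves from a node A to the node B satisfying next A = some B, and the tail pointer likewise only moves along next-links, and initially head = tail = gInitNode, and whenever the head is moved we have head ≠ tail at the preceding moment, then at all times the tail is reachable from the head via the next relation (the tail never lags behind the head). -/
/-!
Induction on time. The tail only advances along links, and links persist, so it stays ahead
of the head. When the head advances it is not at the tail, so a path from head to tail starts
with the head's unique outgoing link, and the head's new position still reaches the tail.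
-/

namespace Relation

variable {α : Type*} {r s : α → α → Prop}

theorem ReflTransGen.of_step_of_ne (hdet : ∀ a b c, r a b → r a c → b = c) {a b c : α}
    (hac : ReflTransGen r a c) (hab : r a b) (hne : a ≠ c) : ReflTransGen r b c := by
  obtain rfl | ⟨b', hab', hb'c⟩ := hac.cases_head
  · exact absurd rfl hne
  · rwa [hdet _ _ _ hab hab']

theorem ReflTransGen.of_pointer_step (hrs : r ≤ s)
    (hdet : ∀ a b c, r a b → r a c → b = c) {h t h' t' : α} (hht : ReflTransGen r h t)
    (hh : h' = h ∨ (r h h' ∧ h ≠ t)) (ht : t' = t ∨ r t t') : ReflTransGen s h' t' := by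
  have hh't : ReflTransGen r h' t := by
    rcases hh with rfl | ⟨hhh', hne⟩
    · exact hht
    · exact hht.of_step_of_ne hdet hhh' hne
  have hh't_s : ReflTransGen s h' t := ReflTransGen.mono hrs _ _ hh't
  rcases ht with rfl | htt'
  · exact hh't_s
  · exact hh't_s.tail (hrs _ _ htt')

end Relation

/-- The tail never lags behind the head: if the head and tail pointers only move
along next-links of a link-persistent linked list, both start at `gInitNode`, and
the head moves only when `head ≠ tail`, then at every time the tail is reachable
from the head. -/
theorem tail_reachable_from_head {Node : Type*}
    (next : ℕ → Node → Option Node) (head tail : ℕ → Node) (gInitNode : Node)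
    (hpersist : ∀ t a b, next t a = some b → next (t + 1) a = some b)
    (hinit : head 0 = gInitNode ∧ tail 0 = gInitNode)
    (hhead : ∀ t, head (t + 1) = head t ∨
      (next t (head t) = some (head (t + 1)) ∧ head t ≠ tail t))
    (htail : ∀ t, tail (t + 1) = tail t ∨ next t (tail t) = some (tail (t + 1))) :
    ∀ t, Relation.ReflTransGen (fun a b => next t a = some b) (head t) (tail t) := by
  intro t
  induction t with
  | zero => rw [hinit.1, hinit.2]
  | succ t ih =>
    have hdet : ∀ a b c, next t a = some b → next t a = some c → b = c := fun _ _ _ hb hc =>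
      Option.some_injective _ (hb.symm.trans hc)
    exact ih.of_pointer_step (hpersist t) hdet (hhead t) (htail t)
end
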